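/- arXiv:2506.17792 — 2 statements merged into one kernel-verified Lean document; each statement's English description precedes it below -/
import Mathlib

section
/- Let σ be a stationary deterministic policy in a finite MDP satisfying uniform absorption with parameter α, and suppose the one-step Bellman backup under σ has residual at most ε + η at every non-absorbing state, i.e., |Σ_t δ(s,σ(s))(t) V^fin(t) − V^fin(s)| ≤ ε + η, and additionally ‖V^fin − V*‖_∞ ≤ (ε + η)/α. Then the value V^σ of policy σ satisfies ‖V^σ − V*‖_∞ ≤ 2(ε + η)/α. -/
/-- Policy quality: if the stationary deterministic policy `σ` has one-step Bellman backup
residual at most `ε + η` at every non-absorbing state w.r.t. `Vfin`, and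
`‖Vfin − Vstar‖ ≤ (ε + η)/α`, then the value `Vσ` of the policy (fixed point of the
policy-evaluation operator, agreeing with `Vfin` on the absorbing set) satisfies
`‖Vσ − Vstar‖ ≤ 2(ε + η)/α`. -/
theorem stmt_3 {S A : Type*} [Fintype S] [DecidableEq S]
    (act : S → Finset A) (hact : ∀ s, (act s).Nonempty)
    (P : S → A → S → ℝ)
    (hP0 : ∀ s a t, 0 ≤ P s a t)
    (hP1 : ∀ s, ∀ a ∈ act s, ∑ t, P s a t = 1)
    (Abs : Finset S) (α : ℝ) (hα0 : 0 < α) (hα1 : α ≤ 1)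
    (habs : ∀ s ∉ Abs, ∀ a ∈ act s, α ≤ ∑ t ∈ Abs, P s a t)
    (σ : S → A) (hσ : ∀ s, σ s ∈ act s)
    (Tσ : (S → ℝ) → (S → ℝ))
    (hTσ : ∀ V s, Tσ V s = if s ∈ Abs then V s else ∑ t, P s (σ s) t * V t)
    (Vfin Vstar Vσ : S → ℝ) (ε η : ℝ) (hε : 0 ≤ ε) (hη : 0 ≤ η)
    (hres : ∀ s ∉ Abs, |∑ t, P s (σ s) t * Vfin t - Vfin s| ≤ ε + η)
    (hVfV : ‖Vfin - Vstar‖ ≤ (ε + η) / α)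
    (hfixσ : Tσ Vσ = Vσ)
    (hbdσ : ∀ s ∈ Abs, Vσ s = Vfin s) :
    ‖Vσ - Vstar‖ ≤ 2 * (ε + η) / α := by
  set M := ‖Vσ - Vfin‖ with hM
  have hM0 : 0 ≤ M := norm_nonneg _
  have hle : ∀ t, |Vσ t - Vfin t| ≤ M := by
    intro t
    simpa [Real.norm_eq_abs] using norm_le_pi_norm (Vσ - Vfin) t
  have hεη : 0 ≤ ε + η := by linarith
  have hRHS0 : 0 ≤ (1 - α) * M + (ε + η) := by nlinarith
  have key : ∀ s, |Vσ s - Vfin s| ≤ (1 - α) * M + (ε + η) := by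
    intro s
    by_cases hs : s ∈ Abs
    · simpa [hbdσ s hs] using hRHS0
    · have hfix : Vσ s = ∑ t, P s (σ s) t * Vσ t := by
        conv_lhs => rw [← hfixσ]
        rw [hTσ]; simp [hs]
      have h1 : |∑ t, P s (σ s) t * (Vσ t - Vfin t)| ≤ (1 - α) * M := by
        have habs' : α ≤ ∑ t ∈ Abs, P s (σ s) t := habs s hs (σ s) (hσ s)
        have hcompl : (∑ t ∈ Absᶜ, P s (σ s) t) ≤ 1 - α := by
          have := Finset.sum_add_sum_compl Abs (P s (σ s))
          rw [hP1 s (σ s) (hσ s)] at this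
          linarith
        calc |∑ t, P s (σ s) t * (Vσ t - Vfin t)|
            ≤ ∑ t, |P s (σ s) t * (Vσ t - Vfin t)| := Finset.abs_sum_le_sum_abs _ _
          _ = ∑ t, P s (σ s) t * |Vσ t - Vfin t| := by
              refine Finset.sum_congr rfl fun t _ => ?_
              rw [abs_mul, abs_of_nonneg (hP0 s (σ s) t)]
          _ = ∑ t ∈ Abs, P s (σ s) t * |Vσ t - Vfin t|
              + ∑ t ∈ Absᶜ, P s (σ s) t * |Vσ t - Vfin t| :=
              (Finset.sum_add_sum_compl Abs _).symm
          _ ≤ 0 + ∑ t ∈ Absᶜ, P s (σ s) t * M := by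
              apply add_le_add
              · refine (Finset.sum_eq_zero fun t ht => ?_).le
                simp [hbdσ t ht]
              · exact Finset.sum_le_sum fun t _ =>
                  mul_le_mul_of_nonneg_left (hle t) (hP0 _ _ _)
          _ = (∑ t ∈ Absᶜ, P s (σ s) t) * M := by rw [zero_add, Finset.sum_mul]
          _ ≤ (1 - α) * M := by
              apply mul_le_mul_of_nonneg_right hcompl hM0
      have h2 : |∑ t, P s (σ s) t * Vfin t - Vfin s| ≤ ε + η := hres s hs
      have hsplit : Vσ s - Vfin s
          = (∑ t, P s (σ s) t * (Vσ t - Vfin t)) + (∑ t, P s (σ s) t * Vfin t - Vfin s) := by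
        rw [hfix]
        simp [mul_sub, Finset.sum_sub_distrib]
      rw [hsplit]
      exact le_trans (abs_add_le _ _) (add_le_add h1 h2)
  have hMle : M ≤ (1 - α) * M + (ε + η) := by
    rw [hM]
    apply pi_norm_le_iff_of_nonneg hRHS0 |>.2
    intro t
    simpa [Real.norm_eq_abs] using key t
  have hM2 : M ≤ (ε + η) / α := by
    rw [le_div_iff₀ hα0]
    nlinarith
  have htri : ‖Vσ - Vstar‖ ≤ M + (ε + η) / α := by
    have : Vσ - Vstar = (Vσ - Vfin) + (Vfin - Vstar) := by abel
    rw [this]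
    exact le_trans (norm_add_le _ _) (add_le_add le_rfl hVfV)
  calc ‖Vσ - Vstar‖ ≤ M + (ε + η) / α := htri
    _ ≤ (ε + η) / α + (ε + η) / α := by linarith
    _ = 2 * (ε + η) / α := by ring
end

section
/- If the leaf blocks of SHARP partition the state space and each leaf's value vector satisfies its local Bellman equations to residual ε with boundary values within η of the final global vector, then the composed global vector V^fin satisfies the global Bellman residual bound ‖T V^fin − V^fin‖_∞ ≤ ε + η. -/
/-- If the leaf blocks partition the state space, each leaf's value vector satisfies its local
Bellman equations to residual `ε` with boundary values within `η` of the final global vector,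
then the composed global vector `Vfin` satisfies `‖T Vfin − Vfin‖ ≤ ε + η`. -/
theorem stmt_7 {S A ι : Type*} [Fintype S] [DecidableEq S] [DecidableEq ι]
    (act : S → Finset A) (hact : ∀ s, (act s).Nonempty)
    (P : S → A → S → ℝ)
    (hP0 : ∀ s a t, 0 ≤ P s a t)
    (hP1 : ∀ s, ∀ a ∈ act s, ∑ t, P s a t = 1)
    (G : Finset S)
    (T : (S → ℝ) → (S → ℝ))
    (hT : ∀ V s, T V s = if s ∈ G then V s
        else (act s).sup' (hact s) (fun a => ∑ t, P s a t * V t))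
    (B : ι → Finset S)
    (hdisj : ∀ i j, i ≠ j → Disjoint (B i) (B j))
    (hne : ∀ i, (B i).Nonempty)
    (idx : S → ι) (hidx : ∀ s, s ∈ B (idx s))
    (Vloc Vused : ι → S → ℝ)
    (ε η : ℝ) (hε : 0 ≤ ε) (hηnn : 0 ≤ η)
    (Vhat : ι → S → ℝ)
    (hVhat : ∀ i s, Vhat i s = if s ∈ B i then Vloc i s else Vused i s)
    (Vfin : S → ℝ) (hVfin : ∀ s, Vfin s = Vloc (idx s) s)
    (hres : ∀ i, ∀ s ∈ B i, s ∉ G →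
      |(act s).sup' (hact s) (fun a => ∑ t, P s a t * Vhat i t) - Vloc i s| ≤ ε)
    (hbound : ∀ i, ∀ t ∉ B i, (∃ s ∈ B i, ∃ a ∈ act s, 0 < P s a t) →
      |Vfin t - Vused i t| ≤ η) :
    ‖T Vfin - Vfin‖ ≤ ε + η := by

  have key : ∀ s, |T Vfin s - Vfin s| ≤ ε + η := by
    intro s
    rw [hT]
    by_cases hG : s ∈ G
    · simp only [if_pos hG, sub_self, abs_zero]
      positivity
    · simp only [if_neg hG]
      set i := idx s with hi
      have hsB : s ∈ B i := hidx s
      have hterm : ∀ a ∈ act s,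
          |(∑ t, P s a t * Vfin t) - ∑ t, P s a t * Vhat i t| ≤ η := by
        intro a ha
        rw [← Finset.sum_sub_distrib]
        calc |∑ t, (P s a t * Vfin t - P s a t * Vhat i t)|
            ≤ ∑ t, |P s a t * Vfin t - P s a t * Vhat i t| :=
              Finset.abs_sum_le_sum_abs _ _
          _ ≤ ∑ t, P s a t * η := by
              apply Finset.sum_le_sum
              intro t _
              rw [← mul_sub, abs_mul, abs_of_nonneg (hP0 s a t)]
              by_cases hPt : P s a t = 0
              · simp [hPt]
              · have hpos : 0 < P s a t := lt_of_le_of_ne (hP0 s a t) (Ne.symm hPt)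
                apply mul_le_mul_of_nonneg_left _ (hP0 s a t)
                by_cases htB : t ∈ B i
                · have hidxt : idx t = i := by
                    by_contra hne'
                    exact (Finset.disjoint_left.mp (hdisj _ _ hne') (hidx t)) htB
                  rw [hVhat, if_pos htB, hVfin, hidxt, sub_self, abs_zero]
                  exact hηnn
                · rw [hVhat, if_neg htB]
                  exact hbound i t htB ⟨s, hsB, a, ha, hpos⟩
          _ = η := by rw [← Finset.sum_mul, hP1 s a ha, one_mul]
      have hsup : |(act s).sup' (hact s) (fun a => ∑ t, P s a t * Vfin t)
          - (act s).sup' (hact s) (fun a => ∑ t, P s a t * Vhat i t)| ≤ η := by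
        rw [abs_sub_le_iff]
        constructor
        · rw [sub_le_iff_le_add]
          apply Finset.sup'_le
          intro a ha
          have h1 := (abs_sub_le_iff.mp (hterm a ha)).1
          have h2 : (∑ t, P s a t * Vhat i t) ≤
              (act s).sup' (hact s) (fun a => ∑ t, P s a t * Vhat i t) :=
            Finset.le_sup' (fun a => ∑ t, P s a t * Vhat i t) ha
          linarith
        · rw [sub_le_iff_le_add]
          apply Finset.sup'_le
          intro a ha
          have h1 := (abs_sub_le_iff.mp (hterm a ha)).2
          have h2 : (∑ t, P s a t * Vfin t) ≤
              (act s).sup' (hact s) (fun a => ∑ t, P s a t * Vfin t) :=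
            Finset.le_sup' (fun a => ∑ t, P s a t * Vfin t) ha
          linarith
      have hr := hres i s hsB hG
      have hVfs : Vfin s = Vloc i s := hVfin s
      calc |(act s).sup' (hact s) (fun a => ∑ t, P s a t * Vfin t) - Vfin s|
          ≤ |(act s).sup' (hact s) (fun a => ∑ t, P s a t * Vfin t)
              - (act s).sup' (hact s) (fun a => ∑ t, P s a t * Vhat i t)|
            + |(act s).sup' (hact s) (fun a => ∑ t, P s a t * Vhat i t) - Vfin s| := by
            exact abs_sub_le _ _ _
        _ ≤ η + ε := by rw [hVfs]; exact add_le_add hsup hr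
        _ = ε + η := add_comm _ _
  apply pi_norm_le_iff_of_nonneg (by positivity) |>.mpr
  intro s
  simpa [Real.norm_eq_abs] using key s
end
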